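/- Let ψ ∈ 𝒯ₙ (with c₀ = 0, c₁ = 0 in its integral representation). For every pair of commuting families A = (A₁,…,Aₙ) and B = (B₁,…,Bₙ) from Gen(X)ⁿ such that each operator Aᵢ − Bᵢ is bounded and D(Aᵢ) = D(Bᵢ) for i = 1,…,n, the operator ψ(A) − ψ(B) is bounded and ‖ψ(A) − ψ(B)‖ ≤ −(2e/(e−1)) · n · Mⁿ · ψ(−(M/(2n))‖A−B‖), where ‖A−B‖ := (‖A₁−B₁‖,…,‖Aₙ−Bₙ‖) and M := max{M_A, M_B}. -/

import Mathlib

open MeasureTheory Complex ContinuousLinearMap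

noncomputable section

/-- A generator of a uniformly bounded `C₀`-semigroup on a complex Banach space `X`,
bundled together with its semigroup `T`, its (maximal) domain `dom` and its action
`gen` (extended by `0` outside of the domain). -/
structure GenOp (X : Type*) [NormedAddCommGroup X] [NormedSpace ℂ X] where
  T : ℝ → X →L[ℂ] X
  T_zero : T 0 = 1
  T_add : ∀ ⦃s t : ℝ⦄, 0 ≤ s → 0 ≤ t → T (s + t) = (T s).comp (T t)
  strong_cont : ∀ x : X, ContinuousOn (fun t => T t x) (Set.Ici 0)
  bounded : ∃ M : ℝ, ∀ t : ℝ, 0 ≤ t → ‖T t‖ ≤ M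
  dom : Submodule ℂ X
  gen : X → X
  mem_dom_iff : ∀ x : X, x ∈ dom ↔ ∃ y : X,
    Filter.Tendsto (fun t : ℝ => (t : ℂ)⁻¹ • (T t x - x)) (nhdsWithin 0 (Set.Ioi 0)) (nhds y)
  gen_spec : ∀ x ∈ dom,
    Filter.Tendsto (fun t : ℝ => (t : ℂ)⁻¹ • (T t x - x)) (nhdsWithin 0 (Set.Ioi 0))
      (nhds (gen x))
  gen_zero : ∀ x, x ∉ dom → gen x = 0

variable {X : Type*} [NormedAddCommGroup X] [NormedSpace ℂ X] [CompleteSpace X]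

/-- Two semigroup generators commute if the corresponding semigroups commute. -/
def GenOp.Commutes (A B : GenOp X) : Prop :=
  ∀ ⦃s t : ℝ⦄, 0 ≤ s → 0 ≤ t → (A.T s).comp (B.T t) = (B.T t).comp (A.T s)

/-- The `n`-parameter semigroup `T_A(u) = T_{A₁}(u₁) ⋯ T_{Aₙ}(uₙ)` associated with a
family `A = (A₁, …, Aₙ)` of semigroup generators. -/
def semigrProd {n : ℕ} (A : Fin n → GenOp X) (u : Fin n → ℝ) : X →L[ℂ] X :=
  (List.ofFn fun i => (A i).T (u i)).prod

/-- The representing measure of a Bernstein function `ψ ∈ 𝒯ₙ` with `c₀ = 0`, `c₁ = 0`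
in its integral representation: a positive measure `μ` on `ℝ₊ⁿ \ {0}` such that
`e^{s·u} - 1` is `μ`-integrable for every `s ∈ (-∞,0)ⁿ`.  The associated Bernstein
function is `ψ(s) = ∫ (e^{s·u} - 1) dμ(u)`, see `bPsi`. -/
structure BernsteinMeasure (n : ℕ) where
  μ : Measure (Fin n → ℝ)
  support : μ {u | ¬ ((∀ i, 0 ≤ u i) ∧ u ≠ 0)} = 0
  integrable : ∀ s : Fin n → ℝ, (∀ i, s i < 0) →
    Integrable (fun u => Real.exp (∑ i, s i * u i) - 1) μ

/-- The Bernstein function `ψ(s) = ∫ (e^{s·u} - 1) dμ(u)` of `n` variables associated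
with a representing measure `μ`. -/
def bPsi {n : ℕ} (ρ : BernsteinMeasure n) (s : Fin n → ℝ) : ℝ :=
  ∫ u, (Real.exp (∑ i, s i * u i) - 1) ∂ρ.μ

/-! Telescoping the products `T_A(u) = T_{A₁}(u₁) ⋯ T_{Aₙ}(uₙ)` factor by factor gives
`‖T_A(u) - T_B(u)‖ ≤ M^{n-1} Σᵢ ‖T_{Aᵢ}(uᵢ) - T_{Bᵢ}(uᵢ)‖`. Each term is at most `2M`, and, by
Duhamel's formula `T_{Aᵢ}(t) - T_{Bᵢ}(t) = ∫₀ᵗ T_{Bᵢ}(t - r) (Aᵢ - Bᵢ) T_{Aᵢ}(r) dr` on the common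
domain, at most `M² ‖Aᵢ - Bᵢ‖ uᵢ`. The elementary bound `min 1 x ≤ e/(e-1) (1 - e^{-x})` then
gives `‖T_A(u) - T_B(u)‖ ≤ -(2e/(e-1)) n Mⁿ (e^{s·u} - 1)` with `s = -(M/2n) ‖A - B‖`, and
integrating against `μ` yields a bounded operator extending `ψ(A) - ψ(B)` whose norm is at most
`-(2e/(e-1)) n Mⁿ ψ(s)`.
-/

open Set Filter Topology

section ProductEstimate

variable {R : Type*} [SeminormedRing R]

lemma norm_ofFn_prod_le_pow {k : ℕ} {m : ℝ} (a : Fin (k + 1) → R) (ha : ∀ i, ‖a i‖ ≤ m) :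
    ‖(List.ofFn a).prod‖ ≤ m ^ (k + 1) := by
  refine (List.norm_prod_le' (mt List.ofFn_eq_nil_iff.1 k.succ_ne_zero)).trans ?_
  rw [List.map_ofFn, List.prod_ofFn]
  simpa using Finset.prod_le_prod (s := Finset.univ) (fun i _ => norm_nonneg (a i)) fun i _ => ha i

lemma norm_ofFn_prod_sub_ofFn_prod_le {m : ℝ} (hm : 0 ≤ m) :
    ∀ {k : ℕ} (a b : Fin (k + 1) → R), (∀ i, ‖a i‖ ≤ m) → (∀ i, ‖b i‖ ≤ m) →
      ‖(List.ofFn a).prod - (List.ofFn b).prod‖ ≤ m ^ k * ∑ i, ‖a i - b i‖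
  | 0, a, b, _, _ => by simp
  | k + 1, a, b, ha, hb => by
    set P := (List.ofFn fun i => a i.succ).prod
    set Q := (List.ofFn fun i => b i.succ).prod
    have hdecomp : (List.ofFn a).prod - (List.ofFn b).prod = a 0 * (P - Q) + (a 0 - b 0) * Q := by
      rw [List.ofFn_succ (f := a), List.ofFn_succ (f := b), List.prod_cons, List.prod_cons]
      noncomm_ring
    have hPQ : ‖P - Q‖ ≤ m ^ k * ∑ i : Fin (k + 1), ‖a i.succ - b i.succ‖ :=
      norm_ofFn_prod_sub_ofFn_prod_le hm _ _ (fun i => ha i.succ) fun i => hb i.succ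
    have hQ : ‖Q‖ ≤ m ^ (k + 1) := norm_ofFn_prod_le_pow _ fun i => hb i.succ
    calc ‖(List.ofFn a).prod - (List.ofFn b).prod‖
        ≤ ‖a 0‖ * ‖P - Q‖ + ‖a 0 - b 0‖ * ‖Q‖ := by
          rw [hdecomp]
          exact (norm_add_le _ _).trans (add_le_add (norm_mul_le _ _) (norm_mul_le _ _))
      _ ≤ m * (m ^ k * ∑ i : Fin (k + 1), ‖a i.succ - b i.succ‖) + ‖a 0 - b 0‖ * m ^ (k + 1) :=
          add_le_add (mul_le_mul (ha 0) hPQ (norm_nonneg _) hm)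
            (mul_le_mul_of_nonneg_left hQ (norm_nonneg _))
      _ = m ^ (k + 1) * ∑ i, ‖a i - b i‖ := by
          rw [Fin.sum_univ_succ (f := fun i => ‖a i - b i‖)]; ring

end ProductEstimate

lemma min_one_le_mul_one_sub_exp_neg {x : ℝ} (hx : 0 ≤ x) :
    min 1 x ≤ Real.exp 1 / (Real.exp 1 - 1) * (1 - Real.exp (-x)) := by
  have he : 0 < Real.exp 1 - 1 := by linarith [Real.add_one_lt_exp one_ne_zero]
  have hexp : Real.exp 1 * Real.exp (-1) = 1 := by rw [← Real.exp_add]; norm_num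
  rw [div_mul_eq_mul_div, le_div_iff₀ he]
  rcases le_total x 1 with h | h
  · -- convexity of `exp` on `[-1, 0]` bounds `exp (-x)` by the chord
    have hconv := convexOn_exp.2 (mem_univ (-1 : ℝ)) (mem_univ (0 : ℝ))
      hx (by linarith : (0 : ℝ) ≤ 1 - x) (by ring)
    simp only [smul_eq_mul, mul_zero, add_zero, mul_neg, mul_one, Real.exp_zero] at hconv
    rw [min_eq_right h]
    nlinarith [mul_le_mul_of_nonneg_left hconv (Real.exp_pos 1).le]
  · have hmono : Real.exp (-x) ≤ Real.exp (-1) := Real.exp_le_exp.2 (by linarith)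
    rw [min_eq_left h]
    nlinarith [mul_le_mul_of_nonneg_left hmono (Real.exp_pos 1).le]

lemma min_mul_le_mul_one_sub_exp_neg {c t : ℝ} (hc : 0 ≤ c) (ht : 0 ≤ t) :
    min c (c * t) ≤ Real.exp 1 / (Real.exp 1 - 1) * c * (1 - Real.exp (-t)) := by
  calc min c (c * t) = c * min 1 t := by rw [mul_min_of_nonneg _ _ hc, mul_one]
    _ ≤ c * (Real.exp 1 / (Real.exp 1 - 1) * (1 - Real.exp (-t))) :=
      mul_le_mul_of_nonneg_left (min_one_le_mul_one_sub_exp_neg ht) hc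
    _ = _ := by ring

lemma ContinuousLinearMap.opNorm_le_of_dense {𝕜 E F : Type*} [NontriviallyNormedField 𝕜]
    [SeminormedAddCommGroup E] [SeminormedAddCommGroup F] [NormedSpace 𝕜 E] [NormedSpace 𝕜 F]
    (f : E →L[𝕜] F) {s : Set E} (hs : Dense s) {C : ℝ} (hC : 0 ≤ C)
    (h : ∀ x ∈ s, ‖f x‖ ≤ C * ‖x‖) : ‖f‖ ≤ C :=
  f.opNorm_le_bound hC fun x =>
    hs.induction h (isClosed_le (continuous_norm.comp f.continuous)
      (continuous_const.mul continuous_norm)) x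

lemma MeasureTheory.exists_clm_integral_apply_eq {α 𝕜 E F : Type*} [MeasurableSpace α]
    {μ : Measure α} [NontriviallyNormedField 𝕜] [SeminormedAddCommGroup E] [NormedSpace 𝕜 E]
    [NormedAddCommGroup F] [NormedSpace ℝ F] [NormedSpace 𝕜 F] [SMulCommClass ℝ 𝕜 F]
    (L : α → E →L[𝕜] F) (hL : ∀ x, AEStronglyMeasurable (fun u => L u x) μ)
    {g : α → ℝ} (hg : Integrable g μ) (hLg : ∀ᵐ u ∂μ, ‖L u‖ ≤ g u) :
    ∃ S : E →L[𝕜] F, (∀ x, S x = ∫ u, L u x ∂μ) ∧ ‖S‖ ≤ ∫ u, g u ∂μ := by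
  have hbound : ∀ x, ∀ᵐ u ∂μ, ‖L u x‖ ≤ g u * ‖x‖ := fun x =>
    hLg.mono fun u hu => (L u).le_of_opNorm_le hu x
  have hint : ∀ x, Integrable (fun u => L u x) μ := fun x =>
    (hg.mul_const ‖x‖).mono' (hL x) (hbound x)
  let S : E →ₗ[𝕜] F :=
    { toFun := fun x => ∫ u, L u x ∂μ
      map_add' := fun x y => by
        simp only [map_add]
        exact integral_add (hint x) (hint y)
      map_smul' := fun c x => by
        simp only [map_smul, RingHom.id_apply]
        exact integral_smul c _ }
  have hS : ∀ x, ‖S x‖ ≤ (∫ u, g u ∂μ) * ‖x‖ := fun x => by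
    rw [← integral_mul_const]
    exact norm_integral_le_of_norm_le (hg.mul_const _) (hbound x)
  have hg0 : 0 ≤ ∫ u, g u ∂μ :=
    integral_nonneg_of_ae (hLg.mono fun u hu => (norm_nonneg _).trans hu)
  exact ⟨S.mkContinuous _ hS, fun _ => rfl, S.mkContinuous_norm_le hg0 hS⟩

lemma tendsto_sub_nhdsGT_zero (s : ℝ) : Tendsto (fun r : ℝ => r - s) (𝓝[>] s) (𝓝[>] 0) :=
  (map_subRight_nhdsGT (c := s) (a := s)).trans_le (by rw [sub_self])

namespace GenOp

variable {E : Type*} [NormedAddCommGroup E] [NormedSpace ℂ E] (A : GenOp E)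

lemma T_add_apply {s t : ℝ} (hs : 0 ≤ s) (ht : 0 ≤ t) (x : E) :
    A.T (s + t) x = A.T s (A.T t x) := by
  rw [A.T_add hs ht, ContinuousLinearMap.comp_apply]

lemma tendsto_slope_zero {x : E} (hx : x ∈ A.dom) :
    Tendsto (fun t : ℝ => t⁻¹ • (A.T t x - x)) (𝓝[>] 0) (𝓝 (A.gen x)) := by
  simpa only [← Complex.ofReal_inv, Complex.coe_smul] using A.gen_spec x hx

lemma tendsto_T_apply {ι : Type*} {l : Filter ι} {r : ι → ℝ} {w : ι → E} {r₀ : ℝ} {w₀ : E}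
    (hr : Tendsto r l (𝓝 r₀)) (hr0 : ∀ᶠ i in l, 0 ≤ r i) (h0 : 0 ≤ r₀)
    (hw : Tendsto w l (𝓝 w₀)) :
    Tendsto (fun i => A.T (r i) (w i)) l (𝓝 (A.T r₀ w₀)) := by
  obtain ⟨M, hM⟩ := A.bounded
  have hfixed : Tendsto (fun i => A.T (r i) w₀) l (𝓝 (A.T r₀ w₀)) :=
    (A.strong_cont w₀ r₀ h0).tendsto.comp (tendsto_nhdsWithin_iff.2 ⟨hr, hr0⟩)
  -- uniform boundedness of `T` turns strong continuity into joint continuity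
  have hmoving : Tendsto (fun i => A.T (r i) (w i) - A.T (r i) w₀) l (𝓝 0) := by
    refine squeeze_zero_norm' (a := fun i => M * ‖w i - w₀‖) ?_ ?_
    · filter_upwards [hr0] with i hi
      rw [← map_sub]
      exact (A.T (r i)).le_of_opNorm_le (hM _ hi) _
    · simpa using ((tendsto_sub_nhds_zero_iff.2 hw).norm.const_mul M)
  simpa using hmoving.add hfixed

lemma tendsto_slope_zero_T_apply {x : E} (hx : x ∈ A.dom) {s : ℝ} (hs : 0 ≤ s) :
    Tendsto (fun t : ℝ => t⁻¹ • (A.T t (A.T s x) - A.T s x)) (𝓝[>] 0)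
      (𝓝 (A.T s (A.gen x))) := by
  refine (((A.T s).continuous.tendsto _).comp (A.tendsto_slope_zero hx)).congr' ?_
  filter_upwards [self_mem_nhdsWithin] with t (ht : 0 < t)
  rw [Function.comp_apply, map_smul_of_tower, map_sub,
    ← A.T_add_apply hs ht.le, ← A.T_add_apply ht.le hs, add_comm]

lemma T_apply_mem_dom {x : E} (hx : x ∈ A.dom) {s : ℝ} (hs : 0 ≤ s) : A.T s x ∈ A.dom := by
  refine (A.mem_dom_iff _).2 ⟨A.T s (A.gen x), ?_⟩
  simpa only [← Complex.ofReal_inv, Complex.coe_smul] using A.tendsto_slope_zero_T_apply hx hs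

lemma gen_T_apply {x : E} (hx : x ∈ A.dom) {s : ℝ} (hs : 0 ≤ s) :
    A.gen (A.T s x) = A.T s (A.gen x) :=
  tendsto_nhds_unique (A.tendsto_slope_zero (A.T_apply_mem_dom hx hs))
    (A.tendsto_slope_zero_T_apply hx hs)

lemma hasDerivWithinAt_T_apply {x : E} (hx : x ∈ A.dom) {s : ℝ} (hs : 0 ≤ s) :
    HasDerivWithinAt (fun r => A.T r x) (A.T s (A.gen x)) (Ici s) s := by
  rw [hasDerivWithinAt_iff_tendsto_slope, Ici_sdiff_left]
  refine ((A.tendsto_slope_zero_T_apply hx hs).comp (tendsto_sub_nhdsGT_zero s)).congr' ?_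
  filter_upwards [self_mem_nhdsWithin] with r (hr : s < r)
  rw [Function.comp_apply, slope_def_module, ← A.T_add_apply (sub_nonneg.2 hr.le) hs,
    sub_add_cancel]

-- Duhamel's formula for `T_A(t) x - T_B(t) x`, in differential form.
lemma hasDerivWithinAt_T_sub_apply_T_apply (B : GenOp E) {x : E} (hx : x ∈ A.dom) {s t : ℝ}
    (hs : 0 ≤ s) (hst : s < t) (hB : A.T s x ∈ B.dom) :
    HasDerivWithinAt (fun r => B.T (t - r) (A.T r x))
      (B.T (t - s) (A.gen (A.T s x) - B.gen (A.T s x))) (Ici s) s := by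
  set z := A.T s x
  have hA : Tendsto (fun y => (y - s)⁻¹ • (A.T y x - z)) (𝓝[>] s) (𝓝 (A.gen z)) := by
    rw [A.gen_T_apply hx hs]
    have h := hasDerivWithinAt_iff_tendsto_slope.1 (A.hasDerivWithinAt_T_apply hx hs)
    rw [Ici_sdiff_left] at h
    exact h.congr fun y => slope_def_module _ _ _
  have hB : Tendsto (fun y => (y - s)⁻¹ • (B.T (y - s) z - z)) (𝓝[>] s) (𝓝 (B.gen z)) :=
    (B.tendsto_slope_zero hB).comp (tendsto_sub_nhdsGT_zero s)
  have hnear : ∀ᶠ y in 𝓝[>] s, y ∈ Ioo s t := Ioo_mem_nhdsGT hst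
  have hlim := B.tendsto_T_apply (r := fun y => t - y)
    ((tendsto_const_nhds.sub tendsto_id).mono_left nhdsWithin_le_nhds)
    (hnear.mono fun y hy => sub_nonneg.2 hy.2.le) (sub_nonneg.2 hst.le) (hA.sub hB)
  rw [hasDerivWithinAt_iff_tendsto_slope, Ici_sdiff_left]
  refine hlim.congr' ?_
  filter_upwards [hnear] with y ⟨hsy, hyt⟩
  have hsplit : B.T (t - s) z = B.T (t - y) (B.T (y - s) z) := by
    rw [← B.T_add_apply (sub_nonneg.2 hyt.le) (sub_nonneg.2 hsy.le), sub_add_sub_cancel]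
  rw [slope_def_module, hsplit, ← smul_sub, sub_sub_sub_cancel_right, map_smul_of_tower, map_sub]

end GenOp

namespace GenOp

variable {E : Type*} [NormedAddCommGroup E] [NormedSpace ℂ E] {A B : GenOp E} {MA MB : ℝ}

lemma norm_T_apply_sub_T_apply_le (hMA : ∀ t, 0 ≤ t → ‖A.T t‖ ≤ MA)
    (hMB : ∀ t, 0 ≤ t → ‖B.T t‖ ≤ MB) (hdom : A.dom ≤ B.dom) {D : E →L[ℂ] E}
    (hD : ∀ x ∈ A.dom, D x = A.gen x - B.gen x) {t : ℝ} (ht : 0 ≤ t) {x : E} (hx : x ∈ A.dom) :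
    ‖A.T t x - B.T t x‖ ≤ MA * MB * ‖D‖ * t * ‖x‖ := by
  set F : ℝ → E := fun r => B.T (t - r) (A.T r x)
  have hcont : ContinuousOn F (Icc 0 t) := fun r hr =>
    B.tendsto_T_apply ((tendsto_const_nhds.sub tendsto_id).mono_left nhdsWithin_le_nhds)
      (eventually_nhdsWithin_of_forall fun y hy => sub_nonneg.2 hy.2) (sub_nonneg.2 hr.2)
      ((A.strong_cont x).mono Icc_subset_Ici_self r hr)
  have hderiv : ∀ r ∈ Ico 0 t, HasDerivWithinAt F (B.T (t - r) (D (A.T r x))) (Ici r) r :=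
    fun r hr => by
      rw [hD _ (A.T_apply_mem_dom hx hr.1)]
      exact A.hasDerivWithinAt_T_sub_apply_T_apply B hx hr.1 hr.2
        (hdom (A.T_apply_mem_dom hx hr.1))
  have hbound : ∀ r ∈ Ico 0 t, ‖B.T (t - r) (D (A.T r x))‖ ≤ MB * (‖D‖ * (MA * ‖x‖)) :=
    fun r hr => (B.T (t - r)).le_of_opNorm_le_of_le (hMB _ (sub_nonneg.2 hr.2.le)) <|
      D.le_of_opNorm_le_of_le le_rfl ((A.T r).le_of_opNorm_le (hMA r hr.1) x)
  have hF0 : F 0 = B.T t x := by simp [F, A.T_zero]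
  have hFt : F t = A.T t x := by simp [F, B.T_zero]
  calc ‖A.T t x - B.T t x‖ = ‖F t - F 0‖ := by rw [hF0, hFt]
    _ ≤ MB * (‖D‖ * (MA * ‖x‖)) * (t - 0) :=
      norm_image_sub_le_of_norm_deriv_right_le_segment hcont hderiv hbound t (right_mem_Icc.2 ht)
    _ = MA * MB * ‖D‖ * t * ‖x‖ := by ring

lemma norm_T_sub_T_le (hMA : ∀ t, 0 ≤ t → ‖A.T t‖ ≤ MA) (hMB : ∀ t, 0 ≤ t → ‖B.T t‖ ≤ MB)
    (hdom : A.dom ≤ B.dom) (hdense : Dense (A.dom : Set E)) {D : E →L[ℂ] E}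
    (hD : ∀ x ∈ A.dom, D x = A.gen x - B.gen x) {t : ℝ} (ht : 0 ≤ t) :
    ‖A.T t - B.T t‖ ≤ MA * MB * ‖D‖ * t := by
  have hMA0 : 0 ≤ MA := (norm_nonneg _).trans (hMA 0 le_rfl)
  have hMB0 : 0 ≤ MB := (norm_nonneg _).trans (hMB 0 le_rfl)
  exact (A.T t - B.T t).opNorm_le_of_dense hdense (by positivity) fun x hx =>
    norm_T_apply_sub_T_apply_le hMA hMB hdom hD ht hx

end GenOp

section SemigroupProduct

variable {E : Type*} [NormedAddCommGroup E] [NormedSpace ℂ E]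

lemma continuousOn_semigrProd_apply :
    ∀ {k : ℕ} (A : Fin k → GenOp E) (x : E),
      ContinuousOn (fun u => semigrProd A u x) {u | ∀ i, 0 ≤ u i}
  | 0, A, x => by simpa [semigrProd] using continuous_const
  | k + 1, A, x => fun v hv => by
    let tail : (Fin (k + 1) → ℝ) → Fin k → ℝ := fun u i => u i.succ
    have htail : ContinuousWithinAt (fun u => semigrProd (fun i => A i.succ) (tail u) x)
        {u | ∀ i, 0 ≤ u i} v :=
      (continuousOn_semigrProd_apply (fun i => A i.succ) x (tail v) fun i => hv i.succ).comp
        (continuous_pi fun i => continuous_apply i.succ).continuousWithinAt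
        fun u hu i => hu i.succ
    simp only [ContinuousWithinAt, semigrProd, List.ofFn_succ, List.prod_cons] at htail ⊢
    exact (A 0).tendsto_T_apply ((continuous_apply 0).continuousWithinAt)
      (eventually_nhdsWithin_of_forall fun u hu => hu 0) (hv 0) htail

end SemigroupProduct

section Perturbation

variable {E : Type*} [NormedAddCommGroup E] [NormedSpace ℂ E]

lemma norm_semigrProd_sub_semigrProd_le {n : ℕ} (hn : 0 < n) {A B : Fin n → GenOp E} {m : ℝ}
    (hA : ∀ i t, 0 ≤ t → ‖(A i).T t‖ ≤ m) (hB : ∀ i t, 0 ≤ t → ‖(B i).T t‖ ≤ m)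
    (hdom : ∀ i, (A i).dom ≤ (B i).dom) (hdense : ∀ i, Dense ((A i).dom : Set E))
    {D : Fin n → E →L[ℂ] E} (hD : ∀ i, ∀ x ∈ (A i).dom, D i x = (A i).gen x - (B i).gen x)
    {u : Fin n → ℝ} (hu : ∀ i, 0 ≤ u i) :
    ‖semigrProd A u - semigrProd B u‖ ≤ -(2 * Real.exp 1 / (Real.exp 1 - 1)) * n * m ^ n *
      (Real.exp (∑ i, -(m / (2 * n)) * ‖D i‖ * u i) - 1) := by
  obtain ⟨k, rfl⟩ : ∃ k, n = k + 1 := ⟨n - 1, by omega⟩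
  have hm : 0 ≤ m := (norm_nonneg _).trans (hA 0 0 le_rfl)
  set c : ℝ := 2 * m * (k + 1 : ℕ)
  set t : ℝ := ∑ i, m / (2 * (k + 1 : ℕ)) * ‖D i‖ * u i
  have ht : 0 ≤ t := Finset.sum_nonneg fun i _ => by have := hu i; positivity
  have hsum : ∑ i, ‖(A i).T (u i) - (B i).T (u i)‖ ≤ min c (c * t) := by
    refine le_min ?_ ?_
    · calc ∑ i, ‖(A i).T (u i) - (B i).T (u i)‖ ≤ ∑ _i : Fin (k + 1), 2 * m :=
            Finset.sum_le_sum fun i _ => (norm_sub_le _ _).trans (by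
              linarith [hA i _ (hu i), hB i _ (hu i)])
        _ = c := by simp [c]; ring
    · calc ∑ i, ‖(A i).T (u i) - (B i).T (u i)‖ ≤ ∑ i, m * m * ‖D i‖ * u i :=
            Finset.sum_le_sum fun i _ =>
              GenOp.norm_T_sub_T_le (hA i) (hB i) (hdom i) (hdense i) (hD i) (hu i)
        _ = c * t := by
            rw [Finset.mul_sum]
            refine Finset.sum_congr rfl fun i _ => ?_
            simp only [c]
            field_simp
  have hexp : ∑ i, -(m / (2 * (k + 1 : ℕ))) * ‖D i‖ * u i = -t := by
    simp only [t, ← Finset.sum_neg_distrib, neg_mul]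
  calc ‖semigrProd A u - semigrProd B u‖ ≤ m ^ k * ∑ i, ‖(A i).T (u i) - (B i).T (u i)‖ :=
        norm_ofFn_prod_sub_ofFn_prod_le hm _ _ (fun i => hA i _ (hu i)) fun i => hB i _ (hu i)
    _ ≤ m ^ k * (Real.exp 1 / (Real.exp 1 - 1) * c * (1 - Real.exp (-t))) :=
        mul_le_mul_of_nonneg_left (hsum.trans (min_mul_le_mul_one_sub_exp_neg
          (by positivity) ht)) (pow_nonneg hm k)
    _ = _ := by rw [hexp]; ring

end Perturbation

namespace BernsteinMeasure

variable {n : ℕ} (ρ : BernsteinMeasure n)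

lemma ae_nonneg : ∀ᵐ u ∂ρ.μ, ∀ i, 0 ≤ u i :=
  (ae_iff.2 ρ.support).mono fun _ hu => hu.1

lemma integrable_exp_sub_one {s : Fin n → ℝ} (hs : ∀ i, s i ≤ 0) :
    Integrable (fun u => Real.exp (∑ i, s i * u i) - 1) ρ.μ := by
  -- `ρ.integrable` only covers strictly negative points; dominate by the one at `min s (-1)`
  set s' : Fin n → ℝ := fun i => min (s i) (-1)
  have hint := ρ.integrable s' fun i => (min_le_right _ _).trans_lt (by norm_num)
  refine hint.mono (Continuous.aestronglyMeasurable (by fun_prop)) (ρ.ae_nonneg.mono fun u hu => ?_)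
  have hle : ∑ i, s' i * u i ≤ ∑ i, s i * u i :=
    Finset.sum_le_sum fun i _ => mul_le_mul_of_nonneg_right (min_le_left _ _) (hu i)
  have hnonpos : ∑ i, s i * u i ≤ 0 :=
    Finset.sum_nonpos fun i _ => mul_nonpos_of_nonpos_of_nonneg (hs i) (hu i)
  have h1 := Real.exp_le_exp.2 hle
  have h2 := Real.exp_le_one_iff.2 hnonpos
  rw [Real.norm_eq_abs, Real.norm_eq_abs, abs_of_nonpos (by linarith),
    abs_of_nonpos (by linarith)]
  linarith

lemma aestronglyMeasurable_semigrProd_apply {E : Type*} [NormedAddCommGroup E]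
    [NormedSpace ℂ E] (A : Fin n → GenOp E) (x : E) :
    AEStronglyMeasurable (fun u => semigrProd A u x) ρ.μ := by
  have hmeas : MeasurableSet {u : Fin n → ℝ | ∀ i, 0 ≤ u i} := by
    simp only [ofPred_forall]
    exact MeasurableSet.iInter fun i => measurableSet_le measurable_const (measurable_pi_apply i)
  rw [← Measure.restrict_eq_self_of_ae_mem ρ.ae_nonneg]
  exact (continuousOn_semigrProd_apply A x).aestronglyMeasurable hmeas

end BernsteinMeasure

theorem bernstein_bounded_perturbation_general {n : ℕ} (hn : 0 < n) (ρ : BernsteinMeasure n)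
    (A B : Fin n → GenOp X)
    (MA MB : ℝ)
    (hMA : ∀ i, ∀ t : ℝ, 0 ≤ t → ‖(A i).T t‖ ≤ MA)
    (hMB : ∀ i, ∀ t : ℝ, 0 ≤ t → ‖(B i).T t‖ ≤ MB)
    (hdom : ∀ i, (A i).dom = (B i).dom)
    (hdense : ∀ i, Dense ((A i).dom : Set X))
    (D : Fin n → (X →L[ℂ] X))
    (hD : ∀ i, ∀ x ∈ (A i).dom, D i x = (A i).gen x - (B i).gen x) :
    ∃ S : X →L[ℂ] X,
      (∀ x ∈ ⨅ i, (A i).dom, S x = ∫ u, (semigrProd A u x - semigrProd B u x) ∂ρ.μ) ∧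
      ‖S‖ ≤ -(2 * Real.exp 1 / (Real.exp 1 - 1)) * n * (max MA MB) ^ n *
        bPsi ρ (fun i => -(max MA MB / (2 * n)) * ‖D i‖) := by
  set m := max MA MB
  have hm : 0 ≤ m := (norm_nonneg _).trans ((hMA ⟨0, hn⟩ 0 le_rfl).trans (le_max_left _ _))
  have hA : ∀ i t, 0 ≤ t → ‖(A i).T t‖ ≤ m := fun i t ht => (hMA i t ht).trans (le_max_left _ _)
  have hB : ∀ i t, 0 ≤ t → ‖(B i).T t‖ ≤ m := fun i t ht => (hMB i t ht).trans (le_max_right _ _)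
  obtain ⟨S, hS, hSle⟩ := exists_clm_integral_apply_eq (μ := ρ.μ)
    (fun u => semigrProd A u - semigrProd B u)
    (fun x => (ρ.aestronglyMeasurable_semigrProd_apply A x).sub
      (ρ.aestronglyMeasurable_semigrProd_apply B x))
    ((ρ.integrable_exp_sub_one fun i => mul_nonpos_of_nonpos_of_nonneg
      (neg_nonpos.2 (by positivity)) (norm_nonneg (D i))).const_mul _)
    (ρ.ae_nonneg.mono fun u hu =>
      norm_semigrProd_sub_semigrProd_le hn hA hB (fun i => (hdom i).le) hdense hD hu)
  exact ⟨S, fun x _ => hS x, hSle.trans_eq (integral_const_mul _ _)⟩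

/-- **Theorem 1.** Let `ψ ∈ 𝒯ₙ` (with `c₀ = 0`, `c₁ = 0`).  For every commuting families
`A = (A₁, …, Aₙ)` and `B = (B₁, …, Bₙ)` from `Gen(X)ⁿ` such that the operators `Aᵢ - Bᵢ`
are bounded (with bounded extension `D i`) and `D(Aᵢ) = D(Bᵢ)`, the operator
`ψ(A) - ψ(B)` is bounded (i.e. the densely defined operator
`x ↦ ∫ (T_A(u) - T_B(u))x dμ(u)` on `D(A)` extends to a bounded operator `S` on `X`) and
`‖ψ(A) - ψ(B)‖ ≤ -(2e/(e-1)) n Mⁿ ψ(-(M/(2n)) ‖A - B‖)`, where `M = max {M_A, M_B}`. -/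
theorem bernstein_bounded_perturbation {n : ℕ} (hn : 0 < n) (ρ : BernsteinMeasure n)
    (A B : Fin n → GenOp X)
    (hAcomm : ∀ i j, (A i).Commutes (A j)) (hBcomm : ∀ i j, (B i).Commutes (B j))
    (MA MB : ℝ)
    (hMA : ∀ i, ∀ t : ℝ, 0 ≤ t → ‖(A i).T t‖ ≤ MA)
    (hMB : ∀ i, ∀ t : ℝ, 0 ≤ t → ‖(B i).T t‖ ≤ MB)
    (hdom : ∀ i, (A i).dom = (B i).dom)
    (hdense : ∀ i, Dense ((A i).dom : Set X))
    (D : Fin n → (X →L[ℂ] X))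
    (hD : ∀ i, ∀ x ∈ (A i).dom, D i x = (A i).gen x - (B i).gen x) :
    ∃ S : X →L[ℂ] X,
      (∀ x ∈ ⨅ i, (A i).dom, S x = ∫ u, (semigrProd A u x - semigrProd B u x) ∂ρ.μ) ∧
      ‖S‖ ≤ -(2 * Real.exp 1 / (Real.exp 1 - 1)) * n * (max MA MB) ^ n *
        bPsi ρ (fun i => -(max MA MB / (2 * n)) * ‖D i‖) :=
  bernstein_bounded_perturbation_general hn ρ A B MA MB hMA hMB hdom hdense D hD
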